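/- Suppose m ≥ 3. Let a ∈ B_int, let b ∈ B_half, let i₁, i₂ ∉ S be two distinct indices, and let F = {x ∈ B_half : x k = b k for all k ∉ {i₁, i₂}} (a set of four points forming a square two-dimensional face of the half-integer cube). Then convexHull ℝ ({a} ∪ F) is a face of the Delone polytope of D_{2m}^* centered at u, i.e. IsExtreme ℝ (convexHull ℝ (B_int ∪ B_half)) (convexHull ℝ ({a} ∪ F)); moreover a does not lie in the affine span of F, so this face is a pyramid over a parallelogram with apex a. -/

import Mathlib

/-!
`B_int` and `B_half` are the vertex sets of unit cubes centred at `u` in the complementary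
coordinate subspaces indexed by `S` and `Sᶜ`. Write `⟪y, z⟫_R = ∑_{j ∈ R} (y j - u j) (z j - u j)`
and `T = Sᶜ \ {i₁, i₂}`. On the cube vertices, `⟪a, ·⟫_S` is at most `α = |S|/4` with equality
only at `a`, `⟪b, ·⟫_T` is at most `β = |T|/4` with equality exactly on `F`, and each pairing
vanishes on the other cube. Since `m ≥ 3`, both `α` and `β` are positive, so the affine functional
`β ⟪a, ·⟫_S + α ⟪b, ·⟫_T` attains its maximum `αβ` on `B_int ∪ B_half` exactly on `{a} ∪ F`,
and the hull of that set is the face it exposes. The pairing `⟪a, ·⟫_S` vanishes on `F` but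
not at `a`, which keeps `a` off the affine span of `F`.
-/

open Finset

section Convexity

variable {E : Type*} [AddCommGroup E] [Module ℝ E]

theorem isExtreme_sep_eq_of_le {A : Set E} (f : E →ᵃ[ℝ] ℝ) {r : ℝ} (hle : ∀ x ∈ A, f x ≤ r) :
    IsExtreme ℝ A {x ∈ A | f x = r} := by
  refine ⟨Set.sep_subset _ _, fun x₁ hx₁ x₂ hx₂ x hx hseg => ?_⟩
  obtain ⟨a, b, ha, hb, hab, rfl⟩ := hseg
  have hcombo : a * f x₁ + b * f x₂ = r := by
    rw [← hx.2, Convex.combo_affine_apply hab, smul_eq_mul, smul_eq_mul]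
  have h₁ := hle x₁ hx₁
  have h₂ := hle x₂ hx₂
  obtain rfl : b = 1 - a := by linarith
  exact ⟨hx₁, by nlinarith⟩

theorem mem_convexHull_sep_eq_of_le {s : Set E} (f : E →ᵃ[ℝ] ℝ) {r : ℝ} (hle : ∀ y ∈ s, f y ≤ r)
    {x : E} (hx : x ∈ convexHull ℝ s) (hxr : f x = r) :
    x ∈ convexHull ℝ {y ∈ s | f y = r} := by
  set C := convexHull ℝ {y ∈ s | f y = r}
  have hC : ∀ y ∈ C, f y = r :=
    fun y hy => convexHull_min (fun z hz => hz.2) ((convex_singleton r).affine_preimage f) hy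
  -- `C ∪ {f < r}` is convex and contains `s`, so it contains `x`.
  have hconv : Convex ℝ (C ∪ {y | f y < r}) := by
    refine convex_iff_forall_pos.2 fun y hy z hz a b ha hb hab => ?_
    by_cases hyz : y ∈ C ∧ z ∈ C
    · exact Or.inl (convex_convexHull ℝ _ hyz.1 hyz.2 ha.le hb.le hab)
    · right
      have hle' : ∀ w ∈ C ∪ {y | f y < r}, f w ≤ r := by
        rintro w (hw | hw)
        exacts [(hC w hw).le, hw.le]
      rw [Set.mem_ofPred_eq, Convex.combo_affine_apply hab, smul_eq_mul, smul_eq_mul]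
      obtain rfl : b = 1 - a := by linarith
      rcases not_and_or.1 hyz with hy' | hz'
      · have : f y < r := hy.resolve_left hy'
        nlinarith [mul_pos ha (sub_pos.2 this), mul_nonneg hb.le (sub_nonneg.2 (hle' z hz))]
      · have : f z < r := hz.resolve_left hz'
        nlinarith [mul_pos hb (sub_pos.2 this), mul_nonneg ha.le (sub_nonneg.2 (hle' y hy))]
  have hsub : s ⊆ C ∪ {y | f y < r} := fun y hy =>
    (hle y hy).eq_or_lt.imp (fun h => subset_convexHull ℝ _ ⟨hy, h⟩) id
  exact (convexHull_min hsub hconv hx).resolve_right hxr.not_lt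

theorem isExtreme_convexHull_sep_eq_of_le {s : Set E} (f : E →ᵃ[ℝ] ℝ) {r : ℝ}
    (hle : ∀ y ∈ s, f y ≤ r) :
    IsExtreme ℝ (convexHull ℝ s) (convexHull ℝ {y ∈ s | f y = r}) := by
  have hle' : ∀ x ∈ convexHull ℝ s, f x ≤ r :=
    fun x hx => convexHull_min hle ((convex_Iic r).affine_preimage f) hx
  have heq : convexHull ℝ {y ∈ s | f y = r} = {x ∈ convexHull ℝ s | f x = r} := by
    refine subset_antisymm (fun x hx => ⟨convexHull_mono (Set.sep_subset _ _) hx, ?_⟩)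
      fun x hx => mem_convexHull_sep_eq_of_le f hle hx.1 hx.2
    exact convexHull_min (fun z hz => hz.2) ((convex_singleton r).affine_preimage f) hx
  rw [heq]
  exact isExtreme_sep_eq_of_le f hle'

theorem isExtreme_convexHull_union {A B : Set E} (f g : E →ᵃ[ℝ] ℝ) {α β : ℝ} (hα : 0 < α)
    (hβ : 0 < β) (hfA : ∀ x ∈ A, f x ≤ α) (hfB : ∀ x ∈ B, f x = 0) (hgB : ∀ x ∈ B, g x ≤ β)
    (hgA : ∀ x ∈ A, g x = 0) :
    IsExtreme ℝ (convexHull ℝ (A ∪ B))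
      (convexHull ℝ ({x ∈ A | f x = α} ∪ {x ∈ B | g x = β})) := by
  set φ := β • f + α • g
  have hφA : ∀ x ∈ A, φ x = β * f x := fun x hx => by simp [φ, hgA x hx]
  have hφB : ∀ x ∈ B, φ x = α * g x := fun x hx => by simp [φ, hfB x hx]
  have hle : ∀ y ∈ A ∪ B, φ y ≤ α * β := by
    rintro y (hy | hy)
    · rw [hφA y hy]; nlinarith [hfA y hy]
    · rw [hφB y hy]; nlinarith [hgB y hy]
  have hface : {y ∈ A ∪ B | φ y = α * β} = {x ∈ A | f x = α} ∪ {x ∈ B | g x = β} := by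
    ext y
    constructor
    · rintro ⟨hy | hy, hyr⟩
      · exact Or.inl ⟨hy, by rw [hφA y hy] at hyr; nlinarith⟩
      · exact Or.inr ⟨hy, by rw [hφB y hy] at hyr; nlinarith⟩
    · rintro (⟨hy, hyr⟩ | ⟨hy, hyr⟩)
      · exact ⟨Or.inl hy, by rw [hφA y hy, hyr, mul_comm]⟩
      · exact ⟨Or.inr hy, by rw [hφB y hy, hyr]⟩
  rw [← hface]
  exact isExtreme_convexHull_sep_eq_of_le φ hle

end Convexity

theorem AffineMap.apply_eq_of_mem_affineSpan {k V₁ P₁ V₂ : Type*} [Ring k] [AddCommGroup V₁]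
    [Module k V₁] [AddTorsor V₁ P₁] [AddCommGroup V₂] [Module k V₂] (f : P₁ →ᵃ[k] V₂)
    {s : Set P₁} {c : V₂} (hs : ∀ x ∈ s, f x = c) {a : P₁} (ha : a ∈ affineSpan k s) : f a = c := by
  have hmap : f a ∈ (affineSpan k s).map f := AffineSubspace.mem_map.2 ⟨a, ha, rfl⟩
  rw [AffineSubspace.map_span] at hmap
  have hsub : f '' s ⊆ {c} := by
    rintro _ ⟨x, hx, rfl⟩
    exact hs x hx
  exact (AffineSubspace.mem_affineSpan_singleton k V₂).1 (affineSpan_mono k hsub hmap)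

section Cube

variable {ι : Type*}

theorem mul_le_quarter_of_abs_eq_half {p q : ℝ} (hp : |p| = 1/2) (hq : |q| = 1/2) :
    p * q ≤ 1/4 := by
  rcases (abs_eq (by norm_num)).1 hp with rfl | rfl <;>
    rcases (abs_eq (by norm_num)).1 hq with rfl | rfl <;> norm_num

theorem mul_eq_quarter_iff_of_abs_eq_half {p q : ℝ} (hp : |p| = 1/2) (hq : |q| = 1/2) :
    p * q = 1/4 ↔ q = p := by
  rcases (abs_eq (by norm_num)).1 hp with rfl | rfl <;>
    rcases (abs_eq (by norm_num)).1 hq with rfl | rfl <;> norm_num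

theorem sum_mul_le_card_div_four {T : Finset ι} {p q : ι → ℝ} (hp : ∀ j ∈ T, |p j| = 1/2)
    (hq : ∀ j ∈ T, |q j| = 1/2) : ∑ j ∈ T, p j * q j ≤ #T / 4 := by
  calc ∑ j ∈ T, p j * q j ≤ ∑ _j ∈ T, (1/4 : ℝ) :=
        sum_le_sum fun j hj => mul_le_quarter_of_abs_eq_half (hp j hj) (hq j hj)
    _ = #T / 4 := by rw [sum_const, nsmul_eq_mul]; ring

theorem sum_mul_eq_card_div_four_iff {T : Finset ι} {p q : ι → ℝ} (hp : ∀ j ∈ T, |p j| = 1/2)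
    (hq : ∀ j ∈ T, |q j| = 1/2) : ∑ j ∈ T, p j * q j = #T / 4 ↔ ∀ j ∈ T, q j = p j := by
  have hquarter : #T / 4 = ∑ _j ∈ T, (1/4 : ℝ) := by rw [sum_const, nsmul_eq_mul]; ring
  rw [hquarter, sum_eq_sum_iff_of_le fun j hj => mul_le_quarter_of_abs_eq_half (hp j hj) (hq j hj)]
  exact forall₂_congr fun j hj => mul_eq_quarter_iff_of_abs_eq_half (hp j hj) (hq j hj)

def cubeVertices (T : Finset ι) (u : EuclideanSpace ℝ ι) : Set (EuclideanSpace ℝ ι) :=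
  {x | (∀ i ∉ T, x i = u i) ∧ ∀ i ∈ T, |x i - u i| = 1/2}

noncomputable def centeredPairing (R : Finset ι) (u p : EuclideanSpace ℝ ι) :
    EuclideanSpace ℝ ι →ᵃ[ℝ] ℝ where
  toFun x := ∑ j ∈ R, (p j - u j) * (x j - u j)
  linear := ∑ j ∈ R, (p j - u j) • EuclideanSpace.projₗ j
  map_vadd' x v := by
    simp only [vadd_eq_add, PiLp.add_apply, LinearMap.coe_sum, LinearMap.coe_smul, Finset.sum_apply,
      Pi.smul_apply, PiLp.projₗ_apply, smul_eq_mul, ← sum_add_distrib]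
    exact sum_congr rfl fun j _ => by ring

theorem centeredPairing_apply (R : Finset ι) (u p x : EuclideanSpace ℝ ι) :
    centeredPairing R u p x = ∑ j ∈ R, (p j - u j) * (x j - u j) := rfl

variable {T R : Finset ι} {u p x : EuclideanSpace ℝ ι}

theorem centeredPairing_eq_zero (hx : x ∈ cubeVertices T u) (hR : Disjoint R T) :
    centeredPairing R u p x = 0 :=
  sum_eq_zero fun j hj => by rw [hx.1 j (disjoint_left.1 hR hj), sub_self, mul_zero]

theorem centeredPairing_le (hp : p ∈ cubeVertices T u) (hx : x ∈ cubeVertices T u)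
    (hR : R ⊆ T) : centeredPairing R u p x ≤ #R / 4 :=
  sum_mul_le_card_div_four (fun j hj => hp.2 j (hR hj)) (fun j hj => hx.2 j (hR hj))

theorem centeredPairing_eq_card_div_four_iff (hp : p ∈ cubeVertices T u)
    (hx : x ∈ cubeVertices T u) (hR : R ⊆ T) :
    centeredPairing R u p x = #R / 4 ↔ ∀ j ∈ R, x j = p j := by
  rw [centeredPairing_apply, sum_mul_eq_card_div_four_iff (fun j hj => hp.2 j (hR hj))
    (fun j hj => hx.2 j (hR hj))]
  exact forall₂_congr fun j _ => sub_left_inj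

theorem sep_centeredPairing_eq_card_div_four (hp : p ∈ cubeVertices T u) (hR : R ⊆ T) :
    {x ∈ cubeVertices T u | centeredPairing R u p x = #R / 4} =
      {x ∈ cubeVertices T u | ∀ j ∈ R, x j = p j} :=
  Set.sep_ext_iff.2 fun _ hx => centeredPairing_eq_card_div_four_iff hp hx hR

theorem eq_of_mem_cubeVertices (hp : p ∈ cubeVertices T u) (hx : x ∈ cubeVertices T u)
    (h : ∀ j ∈ T, x j = p j) : x = p := by
  ext j
  by_cases hj : j ∈ T
  · exact h j hj
  · rw [hx.1 j hj, hp.1 j hj]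

end Cube

theorem stmt_9_general (m : ℕ) (hm : 3 ≤ m)
    (S : Finset (Fin (2 * m))) (hS : S.card = m)
    (u : EuclideanSpace ℝ (Fin (2 * m)))
    (Bhalf Bint : Set (EuclideanSpace ℝ (Fin (2 * m))))
    (hBhalf : Bhalf = {x : EuclideanSpace ℝ (Fin (2 * m)) |
      (∀ i ∈ S, x i = u i) ∧ (∀ i ∉ S, |x i - u i| = 1/2)})
    (hBint : Bint = {x : EuclideanSpace ℝ (Fin (2 * m)) |
      (∀ i ∉ S, x i = u i) ∧ (∀ i ∈ S, |x i - u i| = 1/2)})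
    (a : EuclideanSpace ℝ (Fin (2 * m))) (ha : a ∈ Bint)
    (b : EuclideanSpace ℝ (Fin (2 * m))) (hb : b ∈ Bhalf)
    (i₁ i₂ : Fin (2 * m))
    (F : Set (EuclideanSpace ℝ (Fin (2 * m))))
    (hF : F = {x ∈ Bhalf | ∀ k, k ≠ i₁ → k ≠ i₂ → x k = b k}) :
    IsExtreme ℝ (convexHull ℝ (Bint ∪ Bhalf)) (convexHull ℝ ({a} ∪ F)) ∧
    a ∉ affineSpan ℝ F := by
  replace hBint : Bint = cubeVertices S u := hBint
  replace hBhalf : Bhalf = cubeVertices Sᶜ u := by simp [hBhalf, cubeVertices]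
  subst hBint hBhalf hF
  set T := Sᶜ \ {i₁, i₂}
  have hT : T ⊆ Sᶜ := sdiff_subset
  have hS_pos : (0 : ℝ) < #S / 4 := by rw [hS]; positivity
  have hT_pos : (0 : ℝ) < #T / 4 := by
    have hsdiff : #Sᶜ - #{i₁, i₂} ≤ #T := le_card_sdiff _ _
    have hpair : #{i₁, i₂} ≤ 2 := card_le_two
    rw [card_compl, Fintype.card_fin, hS] at hsdiff
    have : 0 < #T := by omega
    positivity
  have hapex : {x ∈ cubeVertices S u | centeredPairing S u a x = #S / 4} = {a} := by
    rw [sep_centeredPairing_eq_card_div_four ha subset_rfl]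
    ext x
    exact ⟨fun hx => eq_of_mem_cubeVertices ha hx.1 hx.2, by rintro rfl; exact ⟨ha, fun _ _ => rfl⟩⟩
  have hbase : {x ∈ cubeVertices Sᶜ u | centeredPairing T u b x = #T / 4} =
      {x ∈ cubeVertices Sᶜ u | ∀ k, k ≠ i₁ → k ≠ i₂ → x k = b k} := by
    rw [sep_centeredPairing_eq_card_div_four hb hT]
    refine Set.sep_ext_iff.2 fun x hx => ⟨fun h k hk₁ hk₂ => ?_, fun h k hk => ?_⟩
    · by_cases hk : k ∈ S
      · rw [hx.1 k (by simpa using hk), hb.1 k (by simpa using hk)]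
      · exact h k (by simp [T, hk, hk₁, hk₂])
    · simp only [T, mem_sdiff, mem_insert, mem_singleton, not_or] at hk
      exact h k hk.2.1 hk.2.2
  refine ⟨?_, fun hspan => ?_⟩
  · have hface := isExtreme_convexHull_union (centeredPairing S u a) (centeredPairing T u b)
      hS_pos hT_pos (fun x hx => centeredPairing_le ha hx subset_rfl)
      (fun x hx => centeredPairing_eq_zero hx disjoint_compl_right)
      (fun x hx => centeredPairing_le hb hx hT)
      (fun x hx => centeredPairing_eq_zero hx (disjoint_of_subset_left hT disjoint_compl_left))
    rwa [hapex, hbase] at hface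
  · have hzero := (centeredPairing S u a).apply_eq_of_mem_affineSpan
      (fun x hx => centeredPairing_eq_zero hx.1 disjoint_compl_right) hspan
    rw [(centeredPairing_eq_card_div_four_iff ha ha subset_rfl).2 fun _ _ => rfl] at hzero
    exact hS_pos.ne' hzero

/-- If `m ≥ 3`, `a ∈ B_int`, `b ∈ B_half`, and `F` is the square face of the half-integer
cube through `b` in the two coordinate directions `i₁, i₂ ∉ S`, then
`convexHull ℝ ({a} ∪ F)` is a face of the Delone polytope (free sum) of `D_{2m}^*`
centered at `u`, and `a` does not lie in the affine span of `F`; so this face is a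
pyramid over a parallelogram with apex `a`. -/
theorem stmt_9 (m : ℕ) (hm : 3 ≤ m)
    (S : Finset (Fin (2 * m))) (hS : S.card = m)
    (u : EuclideanSpace ℝ (Fin (2 * m)))
    (huS : ∀ i ∈ S, ∃ k : ℤ, u i = (k : ℝ) + 1/2)
    (huI : ∀ i ∉ S, ∃ k : ℤ, u i = (k : ℝ))
    (Bhalf Bint : Set (EuclideanSpace ℝ (Fin (2 * m))))
    (hBhalf : Bhalf = {x : EuclideanSpace ℝ (Fin (2 * m)) |
      (∀ i ∈ S, x i = u i) ∧ (∀ i ∉ S, |x i - u i| = 1/2)})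
    (hBint : Bint = {x : EuclideanSpace ℝ (Fin (2 * m)) |
      (∀ i ∉ S, x i = u i) ∧ (∀ i ∈ S, |x i - u i| = 1/2)})
    (a : EuclideanSpace ℝ (Fin (2 * m))) (ha : a ∈ Bint)
    (b : EuclideanSpace ℝ (Fin (2 * m))) (hb : b ∈ Bhalf)
    (i₁ i₂ : Fin (2 * m)) (hi₁ : i₁ ∉ S) (hi₂ : i₂ ∉ S) (hi : i₁ ≠ i₂)
    (F : Set (EuclideanSpace ℝ (Fin (2 * m))))
    (hF : F = {x ∈ Bhalf | ∀ k, k ≠ i₁ → k ≠ i₂ → x k = b k}) :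
    IsExtreme ℝ (convexHull ℝ (Bint ∪ Bhalf)) (convexHull ℝ ({a} ∪ F)) ∧
    a ∉ affineSpan ℝ F :=
  stmt_9_general m hm S hS u Bhalf Bint hBhalf hBint a ha b hb i₁ i₂ F hF
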